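/- Let a < b be real numbers, let F : ℝ → ℂ be continuously differentiable on I = [a, b], let 0 < λ ≤ b − a, let p, p' ∈ (1, ∞) satisfy 1/p + 1/p' = 1, and let I₀ ⊆ I be a subinterval of length λ. Then for every t ∈ I₀ one has |F(t)| ≤ λ^{−1} ∫_I |F(s)| ds + λ^{1/p'} (∫_I |F'(s)|^p ds)^{1/p}. -/

import Mathlib

/-!
Let `s` minimise `‖F‖` on `I₀ = [c, d]`, so that `λ ‖F s‖ ≤ ∫_{I₀} ‖F‖ ≤ ∫_I ‖F‖`. By the
fundamental theorem of calculus `‖F t - F s‖ ≤ ∫_{I₀} ‖F'‖`, and Hölder's inequality against the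
constant `1` on `I₀` bounds this by `λ^{1/p'} (∫_I ‖F'‖^p)^{1/p}`.
-/

open MeasureTheory Set
open scoped ENNReal

theorem exists_mem_Icc_sub_mul_le_integral {f : ℝ → ℝ} {c d : ℝ} (hcd : c ≤ d)
    (hf : ContinuousOn f (Icc c d)) : ∃ s ∈ Icc c d, (d - c) * f s ≤ ∫ x in c..d, f x := by
  obtain ⟨s, hs, hmin⟩ := isCompact_Icc.exists_isMinOn (nonempty_Icc.2 hcd) hf
  refine ⟨s, hs, ?_⟩
  simpa [hcd] using intervalIntegral.integral_mono_on hcd (intervalIntegrable_const (μ := volume))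
    (hf.intervalIntegrable_of_Icc hcd) fun x hx => hmin hx

theorem norm_sub_le_integral_norm_of_hasDerivAt {E : Type*} [NormedAddCommGroup E]
    [NormedSpace ℝ E] [CompleteSpace E] {F f : ℝ → E} {c d s t : ℝ}
    (hF : ContinuousOn F (Icc c d)) (hderiv : ∀ x ∈ Ioo c d, HasDerivAt F (f x) x)
    (hf : IntervalIntegrable f volume c d) (hs : s ∈ Icc c d) (ht : t ∈ Icc c d) :
    ‖F t - F s‖ ≤ ∫ x in c..d, ‖f x‖ := by
  wlog hst : s ≤ t generalizing s t
  · rw [norm_sub_rev]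
    exact this ht hs (le_of_not_ge hst)
  have hsub : uIcc s t ⊆ uIcc c d :=
    uIcc_subset_uIcc (mem_uIcc_of_le hs.1 hs.2) (mem_uIcc_of_le ht.1 ht.2)
  rw [← intervalIntegral.integral_eq_sub_of_hasDerivAt_of_le hst
    (hF.mono (Icc_subset_Icc hs.1 ht.2)) (fun x hx => hderiv x (Ioo_subset_Ioo hs.1 ht.2 hx))
    (hf.mono_set hsub)]
  calc ‖∫ x in s..t, f x‖ ≤ ∫ x in s..t, ‖f x‖ :=
        intervalIntegral.norm_integral_le_integral_norm hst
    _ ≤ ∫ x in c..d, ‖f x‖ := intervalIntegral.integral_mono_interval hs.1 hst ht.2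
        (ae_of_all _ fun _ => norm_nonneg _) hf.norm

theorem intervalIntegral.integral_norm_le_rpow_mul_integral_norm_rpow {E : Type*}
    [NormedAddCommGroup E] {f : ℝ → E} {c d p q : ℝ} (hpq : p.HolderConjugate q) (hcd : c ≤ d)
    (hf : MemLp f (ENNReal.ofReal p) (volume.restrict (Ioc c d))) :
    ∫ x in c..d, ‖f x‖ ≤ (d - c) ^ (1 / q) * (∫ x in c..d, ‖f x‖ ^ p) ^ (1 / p) := by
  have hone : MemLp (fun _ => (1 : ℝ)) (ENNReal.ofReal q) (volume.restrict (Ioc c d)) :=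
    memLp_const 1
  have := integral_mul_norm_le_Lp_mul_Lq hpq hf.norm hone
  simpa [intervalIntegral.integral_of_le hcd, hcd, mul_comm] using this

theorem ContDiffOn.memLp_deriv {E : Type*} [NormedAddCommGroup E] [NormedSpace ℝ E]
    {F : ℝ → E} {a b : ℝ} (hab : a < b) (hF : ContDiffOn ℝ 1 F (Icc a b)) (q : ℝ≥0∞) :
    MemLp (deriv F) q (volume.restrict (Icc a b)) := by
  have hcont := hF.continuousOn_derivWithin (uniqueDiffOn_Icc hab) le_rfl
  obtain ⟨C, hC⟩ := isCompact_Icc.exists_bound_of_continuousOn hcont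
  have hmem : MemLp (derivWithin F (Icc a b)) ⊤ (volume.restrict (Icc a b)) :=
    memLp_top_of_bound (hcont.aestronglyMeasurable measurableSet_Icc) C
      ((ae_restrict_iff' measurableSet_Icc).2 (ae_of_all _ hC))
  -- `derivWithin` is continuous up to the endpoints and agrees with `deriv` on the interior
  refine (hmem.mono_exponent le_top).ae_eq ?_
  rw [← Measure.restrict_congr_set Ioo_ae_eq_Icc]
  filter_upwards [ae_restrict_mem measurableSet_Ioo] with x hx
  exact derivWithin_of_mem_nhds (f := F) (Icc_mem_nhds hx.1 hx.2)

theorem ContDiffOn.hasDerivAt_deriv {E : Type*} [NormedAddCommGroup E] [NormedSpace ℝ E]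
    {F : ℝ → E} {a b x : ℝ} (hF : ContDiffOn ℝ 1 F (Icc a b)) (hx : x ∈ Ioo a b) :
    HasDerivAt F (deriv F x) x :=
  ((hF.differentiableOn one_ne_zero x (Ioo_subset_Icc_self hx)).differentiableAt
    (Icc_mem_nhds hx.1 hx.2)).hasDerivAt

theorem ContDiffOn.norm_sub_le_rpow_mul_integral_norm_deriv_rpow {E : Type*}
    [NormedAddCommGroup E] [NormedSpace ℝ E] [CompleteSpace E] {F : ℝ → E} {a b c d p q s t : ℝ}
    (hab : a < b) (hF : ContDiffOn ℝ 1 F (Icc a b)) (hpq : p.HolderConjugate q)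
    (hsub : Icc c d ⊆ Icc a b) (hs : s ∈ Icc c d) (ht : t ∈ Icc c d) :
    ‖F t - F s‖ ≤ (d - c) ^ (1 / q) * (∫ x in a..b, ‖deriv F x‖ ^ p) ^ (1 / p) := by
  have hcd : c ≤ d := hs.1.trans hs.2
  have hac : a ≤ c := (hsub (left_mem_Icc.2 hcd)).1
  have hdb : d ≤ b := (hsub (right_mem_Icc.2 hcd)).2
  have hF' : MemLp (deriv F) (ENNReal.ofReal p) (volume.restrict (Icc a b)) :=
    hF.memLp_deriv hab _
  have hF'cd : MemLp (deriv F) (ENNReal.ofReal p) (volume.restrict (Ioc c d)) :=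
    hF'.mono_measure (Measure.restrict_mono (Ioc_subset_Icc_self.trans hsub) le_rfl)
  have hFts : ‖F t - F s‖ ≤ ∫ x in c..d, ‖deriv F x‖ :=
    norm_sub_le_integral_norm_of_hasDerivAt (hF.continuousOn.mono hsub)
      (fun x hx => hF.hasDerivAt_deriv (Ioo_subset_Ioo hac hdb hx))
      ((intervalIntegrable_iff_integrableOn_Ioc_of_le hcd).2
        (hF'cd.integrable (by simpa using hpq.lt.le))) hs ht
  have hpow : ∫ x in c..d, ‖deriv F x‖ ^ p ≤ ∫ x in a..b, ‖deriv F x‖ ^ p := by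
    refine intervalIntegral.integral_mono_interval hac hcd hdb (ae_of_all _ fun _ => by positivity)
      ((intervalIntegrable_iff_integrableOn_Icc_of_le hab.le).2 ?_)
    have := hF'.integrable_norm_rpow (by simpa using hpq.pos) ENNReal.ofReal_ne_top
    rwa [ENNReal.toReal_ofReal hpq.nonneg] at this
  calc ‖F t - F s‖ ≤ (d - c) ^ (1 / q) * (∫ x in c..d, ‖deriv F x‖ ^ p) ^ (1 / p) :=
        hFts.trans (intervalIntegral.integral_norm_le_rpow_mul_integral_norm_rpow hpq hcd hF'cd)
    _ ≤ (d - c) ^ (1 / q) * (∫ x in a..b, ‖deriv F x‖ ^ p) ^ (1 / p) := by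
      have hpow_nonneg : 0 ≤ ∫ x in c..d, ‖deriv F x‖ ^ p :=
        intervalIntegral.integral_nonneg hcd fun _ _ => by positivity
      gcongr
      exact hpq.one_div_nonneg

theorem oscillating_dunkl_lemma_2_5_intermediate_general
    (a b : ℝ) (F : ℝ → ℂ)
    (hF : ContDiffOn ℝ 1 F (Icc a b))
    (lam p p' : ℝ) (hlam_pos : 0 < lam)
    (hp : 1 < p) (hpp' : 1 / p + 1 / p' = 1)
    (c d : ℝ) (hlen : d - c = lam) (hsub : Icc c d ⊆ Icc a b) :
    ∀ t ∈ Icc c d,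
      ‖F t‖ ≤ lam⁻¹ * (∫ s in a..b, ‖F s‖)
        + lam ^ (1 / p') * (∫ s in a..b, ‖deriv F s‖ ^ p) ^ (1 / p) := by
  intro t ht
  have hcd : c < d := by linarith
  have hac : a ≤ c := (hsub (left_mem_Icc.2 hcd.le)).1
  have hdb : d ≤ b := (hsub (right_mem_Icc.2 hcd.le)).2
  have hab : a < b := (hac.trans_lt hcd).trans_le hdb
  have hpq : p.HolderConjugate p' :=
    Real.holderConjugate_iff.2 ⟨hp, by simpa only [one_div] using hpp'⟩
  obtain ⟨s, hs, hmean⟩ :=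
    exists_mem_Icc_sub_mul_le_integral hcd.le (hF.continuousOn.mono hsub).norm
  have hFs : ‖F s‖ ≤ lam⁻¹ * ∫ x in a..b, ‖F x‖ := by
    rw [le_inv_mul_iff₀ hlam_pos, ← hlen]
    exact hmean.trans (intervalIntegral.integral_mono_interval hac hcd.le hdb
      (ae_of_all _ fun _ => norm_nonneg _) (hF.continuousOn.norm.intervalIntegrable_of_Icc hab.le))
  calc ‖F t‖ ≤ ‖F s‖ + ‖F t - F s‖ := norm_le_insert' _ _
    _ ≤ _ := add_le_add hFs
      (hlen ▸ hF.norm_sub_le_rpow_mul_integral_norm_deriv_rpow hab hpq hsub hs ht)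

/-- Intermediate inequality in the proof of Lemma 2.5: for `t` in a subinterval
`I₀ = [c,d] ⊆ [a,b]` of length `λ`,
`|F(t)| ≤ λ⁻¹ ∫_I |F| + λ^{1/p'} (∫_I |F'|^p)^{1/p}`. -/
theorem oscillating_dunkl_lemma_2_5_intermediate
    (a b : ℝ) (hab : a < b) (F : ℝ → ℂ)
    (hF : ContDiffOn ℝ 1 F (Icc a b))
    (lam p p' : ℝ) (hlam_pos : 0 < lam) (hlam_le : lam ≤ b - a)
    (hp : 1 < p) (hp' : 1 < p') (hpp' : 1 / p + 1 / p' = 1)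
    (c d : ℝ) (hlen : d - c = lam) (hsub : Icc c d ⊆ Icc a b) :
    ∀ t ∈ Icc c d,
      ‖F t‖ ≤ lam⁻¹ * (∫ s in a..b, ‖F s‖)
        + lam ^ (1 / p') * (∫ s in a..b, ‖deriv F s‖ ^ p) ^ (1 / p) :=
  oscillating_dunkl_lemma_2_5_intermediate_general a b F hF lam p p' hlam_pos hp hpp' c d hlen hsub
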